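/- Let R = {[[f(x), g(x)],[0, f(x²)]] : f, g ∈ k[x]}, C the diagonal subring ≅ k[x], D₂ = Hom_C(R_C, C) viewed as a right R-module, and e₁₂ the strictly upper triangular matrix unit. Then D₂ ≅ R/e₁₂R as right R-modules, and End_R(D₂) ≅ I(e₁₂R)/e₁₂R where I(e₁₂R) = {θ ∈ R : θ·e₁₂·R ⊆ e₁₂·R} is the idealizer; moreover this endomorphism ring is isomorphic to R itself. -/

import Mathlib

set_option maxHeartbeats 1000000
set_option synthInstance.maxHeartbeats 400000

open Polynomial MulOpposite

noncomputable section

variable (k : Type*) [Field k]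

/-- The set underlying the ring `R = {[[f(x), g(x)], [0, f(x²)]] : f, g ∈ k[x]}`. -/
def Rset : Set (Matrix (Fin 2) (Fin 2) (Polynomial k)) :=
  {M | ∃ f g : Polynomial k, M = !![f, g; 0, f.comp (Polynomial.X ^ 2)]}

/-- The ring `R`, as a subring of `M₂(k[x])`. -/
def Rsub : Subring (Matrix (Fin 2) (Fin 2) (Polynomial k)) :=
  Subring.closure (Rset k)

/-- The diagonal matrix `c f = diag(f(x), f(x²))`, an element of `C ⊆ R`. -/
def cEl (f : Polynomial k) : Rsub k :=
  ⟨!![f, 0; 0, f.comp (Polynomial.X ^ 2)], Subring.subset_closure ⟨f, 0, rfl⟩⟩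

lemma cEl_one : cEl k 1 = 1 := by
  apply Subtype.ext
  show !![(1 : Polynomial k), 0; 0, (1 : Polynomial k).comp (Polynomial.X ^ 2)] = 1
  rw [Matrix.one_fin_two, Polynomial.one_comp]

lemma cEl_add (f g : Polynomial k) : cEl k (f + g) = cEl k f + cEl k g := by
  apply Subtype.ext
  show !![f + g, 0; 0, (f + g).comp (Polynomial.X ^ 2)] =
    !![f, 0; 0, f.comp (Polynomial.X ^ 2)] + !![g, 0; 0, g.comp (Polynomial.X ^ 2)]
  ext i j
  fin_cases i <;> fin_cases j <;>
    simp [Polynomial.add_comp]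

lemma cEl_mul (f g : Polynomial k) : cEl k (f * g) = cEl k f * cEl k g := by
  apply Subtype.ext
  show !![f * g, 0; 0, (f * g).comp (Polynomial.X ^ 2)] =
    !![f, 0; 0, f.comp (Polynomial.X ^ 2)] * !![g, 0; 0, g.comp (Polynomial.X ^ 2)]
  rw [Matrix.mul_fin_two]
  ext i j
  fin_cases i <;> fin_cases j <;>
    simp [Polynomial.mul_comp]

/-- The ring homomorphism `k[x] → Rᵐᵒᵖ`, `f ↦ c f`, giving the right `C ≅ k[x]`-module
structure of `R`. -/
lemma cEl_zero : cEl k 0 = 0 := by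
  apply Subtype.ext
  show !![(0 : Polynomial k), 0; 0, (0 : Polynomial k).comp (Polynomial.X ^ 2)] = 0
  ext i j
  fin_cases i <;> fin_cases j <;> simp

def cHom : Polynomial k →+* (Rsub k)ᵐᵒᵖ where
  toFun f := op (cEl k f)
  map_one' := by
    show op (cEl k 1) = 1
    rw [cEl_one]; rfl
  map_mul' f g := by
    show op (cEl k (f * g)) = op (cEl k f) * op (cEl k g)
    rw [mul_comm f g, cEl_mul]; rfl
  map_zero' := by
    show op (cEl k 0) = 0
    rw [cEl_zero]; rfl
  map_add' f g := by
    show op (cEl k (f + g)) = op (cEl k f) + op (cEl k g)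
    rw [cEl_add]; rfl

/-- `R` as a right `C ≅ k[x]`-module: `f • r = r * c f`. -/
instance rightCModule : Module (Polynomial k) (Rsub k) :=
  Module.compHom _ (cHom k)

/-- `D₂ = Hom_C(R_C, C)`, the `C ≅ k[x]`-linear dual of `R` with respect to its right
`C`-module structure. -/
abbrev D₂ := (Rsub k) →ₗ[Polynomial k] (Polynomial k)

/-- Left multiplication by `r ∈ R` on `R`, as a `C`-linear endomorphism. -/
def lmulLeft (r : Rsub k) : (Rsub k) →ₗ[Polynomial k] (Rsub k) where
  toFun s := r * s
  map_add' s s' := mul_add r s s'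
  map_smul' f s := (mul_assoc r s (cEl k f)).symm

/-- The right `R`-module structure of `D₂`: `(φ·r)(s) = φ(r·s)`. -/
instance rightRModuleD₂ : Module (Rsub k)ᵐᵒᵖ (D₂ k) where
  smul m φ := LinearMap.comp φ (lmulLeft k m.unop)
  one_smul φ := by
    apply LinearMap.ext; intro s
    show φ ((1 : (Rsub k)ᵐᵒᵖ).unop * s) = φ s
    rw [unop_one, one_mul]
  mul_smul m m' φ := by
    apply LinearMap.ext; intro s
    show φ ((m * m').unop * s) = φ (m'.unop * (m.unop * s))
    rw [unop_mul, mul_assoc]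
  smul_zero m := rfl
  smul_add m φ ψ := rfl
  add_smul m m' φ := by
    apply LinearMap.ext; intro s
    show φ ((m + m').unop * s) = φ (m.unop * s) + φ (m'.unop * s)
    rw [unop_add, add_mul, map_add]
  zero_smul φ := by
    apply LinearMap.ext; intro s
    show φ ((0 : (Rsub k)ᵐᵒᵖ).unop * s) = (0 : Polynomial k)
    rw [unop_zero, zero_mul, map_zero]

/-- The matrix unit `e₁₂` as an element of `R`. -/
def e₁₂el : Rsub k :=
  ⟨!![0, 1; 0, 0], Subring.subset_closure ⟨0, 1, by
    ext i j
    fin_cases i <;> fin_cases j <;> simp⟩⟩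

/-- The right ideal `e₁₂R`, as a right `R`-submodule of `R`. -/
def e₁₂R : Submodule (Rsub k)ᵐᵒᵖ (Rsub k) :=
  Submodule.span (Rsub k)ᵐᵒᵖ {e₁₂el k}

/-! `R` is free over `C` on `1, e₁₂, e₁₂x`: split the corner entry as
`g = g_even(x²) + x·g_odd(x²)`. Hence a `C`-linear functional on `R` is determined by its three
values there, the functional `φ₂` dual to `e₁₂x` generates `D₂`, and `r ↦ φ₂·r` is onto with
kernel `e₁₂R`, so `D₂ ≅ R/e₁₂R`. For any right ideal `I`, an endomorphism of the cyclic module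
`R/I` is left multiplication by a lift of the image of `1`, which must lie in the idealizer `I(I)`;
thus `End(R/I) ≅ I(I)/I`. Finally `I(e₁₂R)` consists of the `[[f(x²), g], [0, f(x⁴)]]`, and
`[[f(x²), g], [0, f(x⁴)]] ↦ [[f, g_odd], [0, f(x²)]]` is a ring map onto `R` with kernel `e₁₂R`. -/

section RightIdealizer

variable {A : Type*} [Ring A] (I : Submodule Aᵐᵒᵖ A)

def rightIdealizer : Subring A where
  carrier := {θ | ∀ x ∈ I, θ * x ∈ I}
  one_mem' x hx := by rwa [one_mul]
  mul_mem' ha hb x hx := by rw [mul_assoc]; exact ha _ (hb x hx)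
  zero_mem' x _ := by rw [zero_mul]; exact I.zero_mem
  add_mem' ha hb x hx := by rw [add_mul]; exact I.add_mem (ha x hx) (hb x hx)
  neg_mem' ha x hx := by rw [neg_mul]; exact I.neg_mem (ha x hx)

lemma mem_rightIdealizer {θ : A} : θ ∈ rightIdealizer I ↔ ∀ x ∈ I, θ * x ∈ I := Iff.rfl

def rightIdealizerToEnd : rightIdealizer I →+* Module.End Aᵐᵒᵖ (A ⧸ I) where
  toFun θ := I.mapQ I (RingEquiv.moduleEndSelfOp A θ) θ.2
  map_one' := by ext; simp
  map_mul' θ θ' := by ext; simp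
  map_zero' := by ext; simp
  map_add' θ θ' := by ext; simp

lemma rightIdealizerToEnd_mk (θ : rightIdealizer I) (a : A) :
    rightIdealizerToEnd I θ (Submodule.Quotient.mk a) = Submodule.Quotient.mk (θ * a) := rfl

lemma rightIdealizerToEnd_surjective : Function.Surjective (rightIdealizerToEnd I) := by
  intro χ
  obtain ⟨θ, hθ⟩ := Submodule.Quotient.mk_surjective I (χ (Submodule.Quotient.mk 1))
  have hχ (a : A) : χ (Submodule.Quotient.mk a) = Submodule.Quotient.mk (θ * a) := by
    calc χ (Submodule.Quotient.mk a) = op a • χ (Submodule.Quotient.mk 1) := by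
          rw [← map_smul, ← Submodule.Quotient.mk_smul, op_smul_eq_mul, one_mul]
      _ = Submodule.Quotient.mk (θ * a) := by
          rw [← hθ, ← Submodule.Quotient.mk_smul, op_smul_eq_mul]
  have hθI : θ ∈ rightIdealizer I := fun x hx => by
    rw [← Submodule.Quotient.mk_eq_zero, ← hχ, (Submodule.Quotient.mk_eq_zero I).2 hx, map_zero]
  exact ⟨⟨θ, hθI⟩, Submodule.linearMap_qext I (LinearMap.ext fun a => (hχ a).symm)⟩

lemma mem_ker_rightIdealizerToEnd {θ : rightIdealizer I} :
    θ ∈ TwoSidedIdeal.ker (rightIdealizerToEnd I) ↔ (θ : A) ∈ I := by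
  rw [TwoSidedIdeal.mem_ker]
  constructor
  · intro h
    simpa [rightIdealizerToEnd_mk] using LinearMap.congr_fun h (Submodule.Quotient.mk 1)
  · intro h
    refine Submodule.linearMap_qext I (LinearMap.ext fun a => ?_)
    rw [LinearMap.comp_apply, LinearMap.comp_apply, Submodule.mkQ_apply, rightIdealizerToEnd_mk,
      LinearMap.zero_apply, Submodule.Quotient.mk_eq_zero, ← op_smul_eq_mul]
    exact I.smul_mem (op a) h

theorem nonempty_end_quotient_ringEquiv (J : TwoSidedIdeal (rightIdealizer I))
    (hJ : ∀ θ, θ ∈ J ↔ (θ : A) ∈ I) :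
    Nonempty (Module.End Aᵐᵒᵖ (A ⧸ I) ≃+* J.ringCon.Quotient) := by
  obtain rfl : J = TwoSidedIdeal.ker (rightIdealizerToEnd I) :=
    SetLike.ext fun θ => (hJ θ).trans (mem_ker_rightIdealizerToEnd I).symm
  exact ⟨(RingCon.quotientKerEquivOfSurjective _ (rightIdealizerToEnd_surjective I)).symm⟩

end RightIdealizer

namespace Polynomial

variable {R : Type*} [CommSemiring R]

def evenPart (g : R[X]) : R[X] := contract 2 g

def oddPart (g : R[X]) : R[X] := contract 2 g.divX

lemma coeff_evenPart (g : R[X]) (n : ℕ) : (evenPart g).coeff n = g.coeff (2 * n) := by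
  rw [evenPart, coeff_contract two_ne_zero, mul_comm]

lemma coeff_oddPart (g : R[X]) (n : ℕ) : (oddPart g).coeff n = g.coeff (2 * n + 1) := by
  rw [oddPart, coeff_contract two_ne_zero, coeff_divX, mul_comm]

lemma coeff_expand_two_add_X_mul_two_mul (a b : R[X]) (n : ℕ) :
    (expand R 2 a + X * expand R 2 b).coeff (2 * n) = a.coeff n := by
  rw [coeff_add, coeff_expand_mul' two_pos]
  rcases n with _ | n
  · simp
  · rw [show 2 * (n + 1) = 2 * n + 1 + 1 by ring, coeff_X_mul, coeff_expand two_pos,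
      if_neg (by omega), add_zero]

lemma coeff_expand_two_add_X_mul_two_mul_add_one (a b : R[X]) (n : ℕ) :
    (expand R 2 a + X * expand R 2 b).coeff (2 * n + 1) = b.coeff n := by
  rw [coeff_add, coeff_X_mul, coeff_expand_mul' two_pos, coeff_expand two_pos, if_neg (by omega),
    zero_add]

lemma evenPart_expand_two_add_X_mul (a b : R[X]) : evenPart (expand R 2 a + X * expand R 2 b) = a :=
  ext fun n => by rw [coeff_evenPart, coeff_expand_two_add_X_mul_two_mul]

lemma oddPart_expand_two_add_X_mul (a b : R[X]) : oddPart (expand R 2 a + X * expand R 2 b) = b :=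
  ext fun n => by rw [coeff_oddPart, coeff_expand_two_add_X_mul_two_mul_add_one]

lemma expand_evenPart_add_X_mul_expand_oddPart (g : R[X]) :
    expand R 2 (evenPart g) + X * expand R 2 (oddPart g) = g := by
  ext n
  obtain ⟨m, rfl | rfl⟩ := Nat.even_or_odd' n
  · rw [coeff_expand_two_add_X_mul_two_mul, coeff_evenPart]
  · rw [coeff_expand_two_add_X_mul_two_mul_add_one, coeff_oddPart]

lemma evenPart_expand (a : R[X]) : evenPart (expand R 2 a) = a := contract_expand 2 two_ne_zero

lemma oddPart_expand (a : R[X]) : oddPart (expand R 2 a) = 0 := by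
  simpa using oddPart_expand_two_add_X_mul a 0

lemma oddPart_X_mul_expand (b : R[X]) : oddPart (X * expand R 2 b) = b := by
  simpa using oddPart_expand_two_add_X_mul 0 b

lemma oddPart_X_mul (g : R[X]) : oddPart (X * g) = evenPart g := by
  ext n
  rw [coeff_oddPart, coeff_evenPart, coeff_X_mul]

lemma evenPart_add (f g : R[X]) : evenPart (f + g) = evenPart f + evenPart g :=
  contract_add two_ne_zero f g

@[simp] lemma oddPart_zero : oddPart (0 : R[X]) = 0 := by
  simpa using oddPart_expand (R := R) 0

lemma oddPart_add (f g : R[X]) : oddPart (f + g) = oddPart f + oddPart g := by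
  ext n
  simp only [coeff_oddPart, coeff_add]

lemma oddPart_mul_expand (g f : R[X]) : oddPart (g * expand R 2 f) = oddPart g * f := by
  conv_lhs => rw [← expand_evenPart_add_X_mul_expand_oddPart g]
  rw [add_mul, mul_assoc, ← map_mul, ← map_mul]
  exact oddPart_expand_two_add_X_mul _ _

lemma oddPart_eq_zero_iff {g : R[X]} : oddPart g = 0 ↔ ∃ a, expand R 2 a = g := by
  constructor
  · intro h
    refine ⟨evenPart g, ?_⟩
    simpa [h] using expand_evenPart_add_X_mul_expand_oddPart g
  · rintro ⟨a, rfl⟩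
    exact oddPart_expand a

lemma eq_zero_iff_evenPart_eq_zero_and_oddPart_eq_zero {g : R[X]} :
    g = 0 ↔ evenPart g = 0 ∧ oddPart g = 0 := by
  constructor
  · rintro rfl
    simp [Polynomial.ext_iff, coeff_evenPart]
  · rintro ⟨he, ho⟩
    rw [← expand_evenPart_add_X_mul_expand_oddPart g, he, ho]
    simp

end Polynomial

def RsetSubring : Subring (Matrix (Fin 2) (Fin 2) k[X]) where
  carrier := Rset k
  one_mem' := ⟨1, 0, by rw [Matrix.one_fin_two, one_comp]⟩
  zero_mem' := ⟨0, 0, by ext i j; fin_cases i <;> fin_cases j <;> simp⟩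
  add_mem' := by
    rintro _ _ ⟨f, g, rfl⟩ ⟨f', g', rfl⟩
    exact ⟨f + f', g + g', by ext i j; fin_cases i <;> fin_cases j <;> simp [add_comp]⟩
  neg_mem' := by
    rintro _ ⟨f, g, rfl⟩
    exact ⟨-f, -g, by ext i j; fin_cases i <;> fin_cases j <;> simp [neg_comp]⟩
  mul_mem' := by
    rintro _ _ ⟨f, g, rfl⟩ ⟨f', g', rfl⟩
    exact ⟨f * f', f * g' + g * f'.comp (X ^ 2), by simp [mul_comp]⟩

lemma coe_Rsub : (Rsub k : Set (Matrix (Fin 2) (Fin 2) k[X])) = Rset k :=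
  congrArg SetLike.coe (Subring.closure_eq (RsetSubring k))

section Coordinates

variable {k}

def mk (f g : k[X]) : Rsub k :=
  ⟨!![f, g; 0, f.comp (X ^ 2)], Subring.subset_closure ⟨f, g, rfl⟩⟩

lemma exists_eq_mk (r : Rsub k) : ∃ f g : k[X], r = mk f g := by
  obtain ⟨f, g, h⟩ : (r : Matrix (Fin 2) (Fin 2) k[X]) ∈ Rset k := coe_Rsub k ▸ r.2
  exact ⟨f, g, Subtype.ext h⟩

lemma mk_eq_mk_iff {f g f' g' : k[X]} : mk f g = mk f' g' ↔ f = f' ∧ g = g' :=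
  ⟨fun h => ⟨congrArg (fun r : Rsub k => r.1 0 0) h, congrArg (fun r : Rsub k => r.1 0 1) h⟩,
    fun ⟨hf, hg⟩ => hf ▸ hg ▸ rfl⟩

lemma mk_add (f g f' g' : k[X]) : mk f g + mk f' g' = mk (f + f') (g + g') :=
  Subtype.ext <| by ext i j; fin_cases i <;> fin_cases j <;> simp [mk, add_comp]

lemma mk_mul (f g f' g' : k[X]) :
    mk f g * mk f' g' = mk (f * f') (f * g' + g * expand k 2 f') :=
  Subtype.ext <| by simp [mk, mul_comp, expand_eq_comp_X_pow]

lemma mk_zero : mk (0 : k[X]) 0 = 0 :=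
  Subtype.ext <| by ext i j; fin_cases i <;> fin_cases j <;> simp [mk]

lemma mk_one : mk (1 : k[X]) 0 = 1 :=
  Subtype.ext <| by simp [mk, Matrix.one_fin_two]

lemma mk_eq_zero_iff {f g : k[X]} : mk f g = 0 ↔ f = 0 ∧ g = 0 := by
  rw [← mk_zero, mk_eq_mk_iff]

lemma e₁₂el_eq_mk : e₁₂el k = mk 0 1 :=
  Subtype.ext <| by simp [e₁₂el, mk]

lemma cEl_eq_mk (f : k[X]) : cEl k f = mk f 0 := rfl

lemma smul_eq_mul_cEl (f : k[X]) (r : Rsub k) : f • r = r * cEl k f := rfl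

lemma e₁₂el_mul_mk (f g : k[X]) : e₁₂el k * mk f g = mk 0 (expand k 2 f) := by
  rw [e₁₂el_eq_mk, mk_mul, zero_mul, zero_mul, one_mul, zero_add]

lemma mem_e₁₂R_iff {r : Rsub k} : r ∈ e₁₂R k ↔ ∃ s, r = e₁₂el k * s := by
  rw [e₁₂R, Submodule.mem_span_singleton]
  exact ⟨fun ⟨a, ha⟩ => ⟨a.unop, ha.symm⟩, fun ⟨s, hs⟩ => ⟨op s, hs.symm⟩⟩

lemma mk_mem_e₁₂R_iff {f g : k[X]} : mk f g ∈ e₁₂R k ↔ f = 0 ∧ oddPart g = 0 := by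
  simp only [mem_e₁₂R_iff, oddPart_eq_zero_iff]
  constructor
  · rintro ⟨s, hs⟩
    obtain ⟨a, b, rfl⟩ := exists_eq_mk s
    rw [e₁₂el_mul_mk, mk_eq_mk_iff] at hs
    exact ⟨hs.1, a, hs.2.symm⟩
  · rintro ⟨rfl, a, rfl⟩
    exact ⟨mk a 0, (e₁₂el_mul_mk a 0).symm⟩

end Coordinates

section Dual

variable {k}

def e₁₂X : Rsub k := mk 0 X

lemma mk_eq_smul_one_add_smul_e₁₂el_add_smul_e₁₂X (f g : k[X]) :
    mk f g = f • 1 + evenPart g • e₁₂el k + oddPart g • e₁₂X := by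
  simp only [smul_eq_mul_cEl, cEl_eq_mk, e₁₂el_eq_mk, e₁₂X, one_mul, mk_mul, mk_add]
  simp [expand_evenPart_add_X_mul_expand_oddPart]

lemma D₂_ext {φ ψ : D₂ k} (h₁ : φ 1 = ψ 1) (h₂ : φ (e₁₂el k) = ψ (e₁₂el k))
    (h₃ : φ e₁₂X = ψ e₁₂X) : φ = ψ := by
  ext s
  obtain ⟨f, g, rfl⟩ := exists_eq_mk s
  simp only [mk_eq_smul_one_add_smul_e₁₂el_add_smul_e₁₂X, map_add, map_smul, h₁, h₂, h₃]

def φ₂ : D₂ k where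
  toFun s := oddPart (s.1 0 1)
  map_add' s s' := oddPart_add _ _
  map_smul' f s := by
    obtain ⟨a, b, rfl⟩ := exists_eq_mk s
    rw [smul_eq_mul_cEl, cEl_eq_mk, mk_mul, mul_zero, zero_add]
    exact (oddPart_mul_expand b f).trans (mul_comm _ _)

lemma φ₂_mk (f g : k[X]) : φ₂ (mk f g) = oddPart g := rfl

def smulφ₂ : Rsub k →ₗ[(Rsub k)ᵐᵒᵖ] D₂ k where
  toFun r := op r • φ₂
  map_add' r r' := by rw [op_add, add_smul]
  map_smul' m r := by rw [← op_unop m, op_smul_eq_mul, op_mul, mul_smul, RingHom.id_apply]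

lemma smulφ₂_apply (r s : Rsub k) : smulφ₂ r s = φ₂ (r * s) := rfl

lemma smulφ₂_mk_apply_one (f g : k[X]) : smulφ₂ (mk f g) 1 = oddPart g := by
  rw [smulφ₂_apply, mul_one, φ₂_mk]

lemma smulφ₂_mk_apply_e₁₂el (f g : k[X]) : smulφ₂ (mk f g) (e₁₂el k) = oddPart f := by
  simp [smulφ₂_apply, e₁₂el_eq_mk, mk_mul, φ₂_mk]

lemma smulφ₂_mk_apply_e₁₂X (f g : k[X]) : smulφ₂ (mk f g) e₁₂X = evenPart f := by
  simp [smulφ₂_apply, e₁₂X, mk_mul, φ₂_mk, mul_comm f, oddPart_X_mul]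

lemma smulφ₂_surjective : Function.Surjective (smulφ₂ (k := k)) := fun φ =>
  ⟨mk (expand k 2 (φ e₁₂X) + X * expand k 2 (φ (e₁₂el k))) (X * expand k 2 (φ 1)),
    D₂_ext (by rw [smulφ₂_mk_apply_one, oddPart_X_mul_expand])
      (by rw [smulφ₂_mk_apply_e₁₂el, oddPart_expand_two_add_X_mul])
      (by rw [smulφ₂_mk_apply_e₁₂X, evenPart_expand_two_add_X_mul])⟩

lemma smulφ₂_mk_eq_zero_iff {f g : k[X]} : smulφ₂ (mk f g) = 0 ↔ f = 0 ∧ oddPart g = 0 := by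
  rw [eq_zero_iff_evenPart_eq_zero_and_oddPart_eq_zero (g := f)]
  constructor
  · intro h
    have h₁ := smulφ₂_mk_apply_one f g
    have h₂ := smulφ₂_mk_apply_e₁₂el f g
    have h₃ := smulφ₂_mk_apply_e₁₂X f g
    rw [h, LinearMap.zero_apply] at h₁ h₂ h₃
    exact ⟨⟨h₃.symm, h₂.symm⟩, h₁.symm⟩
  · rintro ⟨⟨he, ho⟩, hg⟩
    exact D₂_ext (by rw [smulφ₂_mk_apply_one, hg]; rfl) (by rw [smulφ₂_mk_apply_e₁₂el, ho]; rfl)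
      (by rw [smulφ₂_mk_apply_e₁₂X, he]; rfl)

lemma ker_smulφ₂ : LinearMap.ker (smulφ₂ (k := k)) = e₁₂R k := by
  ext r
  obtain ⟨f, g, rfl⟩ := exists_eq_mk r
  rw [LinearMap.mem_ker, smulφ₂_mk_eq_zero_iff, mk_mem_e₁₂R_iff]

variable (k) in
def D₂EquivQuotient : D₂ k ≃ₗ[(Rsub k)ᵐᵒᵖ] Rsub k ⧸ e₁₂R k :=
  ((Submodule.quotEquivOfEq _ _ ker_smulφ₂.symm).trans
    (smulφ₂.quotKerEquivOfSurjective smulφ₂_surjective)).symm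

end Dual

section E₁₂Idealizer

variable {k}

lemma mem_rightIdealizer_e₁₂R_iff {θ : Rsub k} :
    θ ∈ rightIdealizer (e₁₂R k) ↔ ∃ u g : k[X], θ = mk (expand k 2 u) g := by
  obtain ⟨f, g, rfl⟩ := exists_eq_mk θ
  constructor
  · intro hθ
    have h := hθ _ (Submodule.mem_span_singleton_self (e₁₂el k))
    rw [e₁₂el_eq_mk, mk_mul, mk_mem_e₁₂R_iff] at h
    obtain ⟨u, hu⟩ := oddPart_eq_zero_iff.1 (by simpa using h.2)
    exact ⟨u, g, by rw [hu]⟩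
  · rintro ⟨u, g', h⟩ x hx
    obtain ⟨a, b, rfl⟩ := exists_eq_mk x
    obtain ⟨rfl, hb⟩ := mk_mem_e₁₂R_iff.1 hx
    rw [h, mk_mul, mk_mem_e₁₂R_iff]
    simp [mul_comm (expand k 2 u), oddPart_mul_expand, hb]

def contractEntries (r : Rsub k) : Rsub k := mk (evenPart (r.1 0 0)) (oddPart (r.1 0 1))

lemma contractEntries_mk (f g : k[X]) : contractEntries (mk f g) = mk (evenPart f) (oddPart g) :=
  rfl

lemma contractEntries_mk_expand (u g : k[X]) :
    contractEntries (mk (expand k 2 u) g) = mk u (oddPart g) := by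
  rw [contractEntries_mk, evenPart_expand]

variable (k) in
def idealizerToRsub : rightIdealizer (e₁₂R k) →+* Rsub k where
  toFun θ := contractEntries θ.1
  map_one' := by simpa [mk_one] using contractEntries_mk_expand (k := k) 1 0
  map_mul' a b := by
    obtain ⟨u, g, ha⟩ := mem_rightIdealizer_e₁₂R_iff.1 a.2
    obtain ⟨u', g', hb⟩ := mem_rightIdealizer_e₁₂R_iff.1 b.2
    simp only [Subring.coe_mul, ha, hb, mk_mul, contractEntries_mk, ← map_mul, evenPart_expand,
      oddPart_add, oddPart_mul_expand, mul_comm (expand k 2 u)]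
    rw [mul_comm u', mul_comm (oddPart g')]
  map_zero' := by simpa [mk_zero] using contractEntries_mk_expand (k := k) 0 0
  map_add' a b := by
    obtain ⟨f, g, ha⟩ := exists_eq_mk a.1
    obtain ⟨f', g', hb⟩ := exists_eq_mk b.1
    simp only [Subring.coe_add, ha, hb, mk_add, contractEntries_mk, evenPart_add, oddPart_add]

lemma idealizerToRsub_apply {θ : rightIdealizer (e₁₂R k)} {u g : k[X]}
    (h : (θ : Rsub k) = mk (expand k 2 u) g) : idealizerToRsub k θ = mk u (oddPart g) := by
  rw [← contractEntries_mk_expand, ← h]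
  rfl

lemma idealizerToRsub_surjective : Function.Surjective (idealizerToRsub k) := by
  intro r
  obtain ⟨f, g, rfl⟩ := exists_eq_mk r
  exact ⟨⟨_, mem_rightIdealizer_e₁₂R_iff.2 ⟨f, X * expand k 2 g, rfl⟩⟩,
    by rw [idealizerToRsub_apply rfl, oddPart_X_mul_expand]⟩

lemma mem_ker_idealizerToRsub {θ : rightIdealizer (e₁₂R k)} :
    θ ∈ TwoSidedIdeal.ker (idealizerToRsub k) ↔ (θ : Rsub k) ∈ e₁₂R k := by
  obtain ⟨u, g, h⟩ := mem_rightIdealizer_e₁₂R_iff.1 θ.2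
  rw [TwoSidedIdeal.mem_ker, idealizerToRsub_apply h, h, mk_eq_zero_iff, mk_mem_e₁₂R_iff,
    expand_eq_zero two_pos]

lemma coe_rightIdealizer_e₁₂R : (rightIdealizer (e₁₂R k) : Set (Rsub k)) =
    {θ : Rsub k | ∀ r : Rsub k, ∃ r' : Rsub k, θ * (e₁₂el k * r) = e₁₂el k * r'} := by
  ext θ
  simp only [SetLike.mem_coe, mem_rightIdealizer, mem_e₁₂R_iff]
  exact ⟨fun h r => h _ ⟨r, rfl⟩, fun h _ ⟨r, hr⟩ => hr ▸ h r⟩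

end E₁₂Idealizer

/-- Example 5.2: for `R = {[[f(x), g(x)], [0, f(x²)]]}` with `C = {diag(f(x), f(x²))} ≅ k[x]`
and `D₂ = Hom_C(R_C, C)` its `C`-dual, a right `R`-module via `(φ·r)(s) = φ(rs)`:
the subring `R ⊆ M₂(k[x])` is the closure of the displayed set (it is already closed);
`D₂ ≅ R/e₁₂R` as right `R`-modules; the endomorphism ring `End_R(D₂)` is isomorphic to
`I(e₁₂R)/e₁₂R`, where `I(e₁₂R) = {θ ∈ R : θ·e₁₂·R ⊆ e₁₂·R}` is the idealizer; and this
endomorphism ring is isomorphic to `R` itself. -/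
theorem D₂_dualizing_data :
    ((Rsub k : Set (Matrix (Fin 2) (Fin 2) (Polynomial k))) = Rset k) ∧
    Nonempty (D₂ k ≃ₗ[(Rsub k)ᵐᵒᵖ] ((Rsub k) ⧸ e₁₂R k)) ∧
    (∃ Idl : Subring (Rsub k),
      (Idl : Set (Rsub k)) =
        {θ : Rsub k | ∀ r : Rsub k, ∃ r' : Rsub k, θ * (e₁₂el k * r) = e₁₂el k * r'} ∧
      ∃ J : TwoSidedIdeal Idl,
        (J : Set Idl) = {x : Idl | ∃ r : Rsub k, (x : Rsub k) = e₁₂el k * r} ∧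
        Nonempty (Module.End (Rsub k)ᵐᵒᵖ (D₂ k) ≃+* J.ringCon.Quotient)) ∧
    Nonempty (Module.End (Rsub k)ᵐᵒᵖ (D₂ k) ≃+* Rsub k) := by
  obtain ⟨e⟩ := nonempty_end_quotient_ringEquiv (e₁₂R k) _ fun _ => mem_ker_idealizerToRsub
  let endD₂Equiv := (D₂EquivQuotient k).conjRingEquiv.trans e
  refine ⟨coe_Rsub k, ⟨D₂EquivQuotient k⟩, ⟨_, coe_rightIdealizer_e₁₂R, _, ?_, ⟨endD₂Equiv⟩⟩,
    ⟨endD₂Equiv.trans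
      (RingCon.quotientKerEquivOfSurjective _ (idealizerToRsub_surjective (k := k)))⟩⟩
  ext θ
  exact mem_ker_idealizerToRsub.trans mem_e₁₂R_iff

end
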